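/- With W = V ⊥ P, φ: C(W) → M₂(C(V)) the Vahlen isomorphism, and Γ(W) the Clifford group of W, a matrix A = [[a,b],[c,d]] ∈ M₂(C(V)) belongs to the Vahlen group 𝒱(V) = φ(Γ(W)) if and only if: (1) ad* − bc* = d*a − b*c = λ·1 for some λ ∈ F^×; (2) ba* − ab* = cd* − dc* = 0; (3) a*c − c*a = d*b − b*d = 0; (4) aā, bb̄, cc̄, dd̄ are scalars (in F·1); (5) bd̄ and ac̄ lie in V (the image of ι); (6) avb̄ + bv̄ā and cvd̄ + dv̄c̄ are scalars for all v ∈ V; (7) avd̄ + bv̄c̄ lies in V for all v ∈ V. Moreover A ∈ φ(Γ⁰(W)) if and only if in addition a,d ∈ C⁰(V) and b,c ∈ C¹(V). -/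

import Mathlib

open CliffordAlgebra

/-- The conditions (1)–(7) of Theorem `vahlenexpand` on a matrix
`A = [[a,b],[c,d]] ∈ M₂(C(V))`.  Here `x* = reverse x` and `x̄ = involute (reverse x)`,
and `a = A 0 0`, `b = A 0 1`, `c = A 1 0`, `d = A 1 1`. -/
def VahlenConds {F : Type*} [Field F] {V : Type*} [AddCommGroup V] [Module F V]
    (Q : QuadraticForm F V) (A : Matrix (Fin 2) (Fin 2) (CliffordAlgebra Q)) : Prop :=
  (∃ l : F, l ≠ 0 ∧
      A 0 0 * reverse (A 1 1) - A 0 1 * reverse (A 1 0)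
        = algebraMap F (CliffordAlgebra Q) l ∧
      reverse (A 1 1) * A 0 0 - reverse (A 0 1) * A 1 0
        = algebraMap F (CliffordAlgebra Q) l) ∧
  (A 0 1 * reverse (A 0 0) - A 0 0 * reverse (A 0 1) = 0 ∧
   A 1 0 * reverse (A 1 1) - A 1 1 * reverse (A 1 0) = 0) ∧
  (reverse (A 0 0) * A 1 0 - reverse (A 1 0) * A 0 0 = 0 ∧
   reverse (A 1 1) * A 0 1 - reverse (A 0 1) * A 1 1 = 0) ∧
  ((∃ s : F, A 0 0 * involute (reverse (A 0 0)) = algebraMap F (CliffordAlgebra Q) s) ∧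
   (∃ s : F, A 0 1 * involute (reverse (A 0 1)) = algebraMap F (CliffordAlgebra Q) s) ∧
   (∃ s : F, A 1 0 * involute (reverse (A 1 0)) = algebraMap F (CliffordAlgebra Q) s) ∧
   (∃ s : F, A 1 1 * involute (reverse (A 1 1)) = algebraMap F (CliffordAlgebra Q) s)) ∧
  ((∃ v : V, A 0 1 * involute (reverse (A 1 1)) = ι Q v) ∧
   (∃ v : V, A 0 0 * involute (reverse (A 1 0)) = ι Q v)) ∧
  (∀ v : V,
    (∃ s : F, A 0 0 * ι Q v * involute (reverse (A 0 1)) +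
        A 0 1 * involute (reverse (ι Q v)) * involute (reverse (A 0 0))
        = algebraMap F (CliffordAlgebra Q) s) ∧
    (∃ s : F, A 1 0 * ι Q v * involute (reverse (A 1 1)) +
        A 1 1 * involute (reverse (ι Q v)) * involute (reverse (A 1 0))
        = algebraMap F (CliffordAlgebra Q) s)) ∧
  (∀ v : V, ∃ w : V,
    A 0 0 * ι Q v * involute (reverse (A 1 1)) +
      A 0 1 * involute (reverse (ι Q v)) * involute (reverse (A 1 0)) = ι Q w)

/-!
Since `φ` is an isomorphism carrying the principal involution, `x ↦ x*` and Clifford conjugation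
of `C(W)` to explicit operations on `M₂(C(V))`, it suffices to describe `Γ(W)` intrinsically:
`x ∈ Γ(W)` iff `x x̄ = x̄ x ∈ F^×` and `x w x* ∈ W` for all `w ∈ W`. Indeed, for `x ∈ Γ(W)` the
element `x̄ x` satisfies `z w = w z'` for all `w`, and for nondegenerate `W` this twisted centre
is `F`: with an orthogonal basis `(eᵢ)`, an element of the subalgebra generated by `eⱼ` and the
`eᵢ`, `i ∈ s`, is `x + eⱼ y` with `x, y` generated by the `eᵢ`, `i ∈ s`; twisted commutation
with `eⱼ` gives `2 q(eⱼ) y' = 0`, so `y = 0`, and the generators are removed one by one.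
Conditions (1)–(7) are then the entries of `A Ā = Ā A = λ` and of `A φ(w) A* ∈ φ(W)` for
`w ∈ V`, `w = f₁` and `w = f₂`.
-/

namespace CliffordAlgebra

section TwistedCentralizer

variable {R M : Type*} [CommRing R] [AddCommGroup M] [Module R M]

variable (Q : QuadraticForm R M) in
def twistedCentralizer (v : M) : Subalgebra R (CliffordAlgebra Q) where
  carrier := {x | x * ι Q v = ι Q v * involute x}
  mul_mem' {x y} hx hy := by
    simp only [Set.mem_ofPred_eq, map_mul] at *
    rw [mul_assoc, hy, ← mul_assoc, hx, mul_assoc]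
  add_mem' {x y} hx hy := by
    simp only [Set.mem_ofPred_eq, map_add, add_mul, mul_add] at *
    rw [hx, hy]
  algebraMap_mem' r := by
    simp only [Set.mem_ofPred_eq, AlgHom.commutes, Algebra.commutes]

variable {Q : QuadraticForm R M}

theorem mem_twistedCentralizer {x : CliffordAlgebra Q} {v : M} :
    x ∈ twistedCentralizer Q v ↔ x * ι Q v = ι Q v * involute x :=
  Iff.rfl

theorem ι_mem_twistedCentralizer {u v : M} (h : Q.IsOrtho u v) :
    ι Q u ∈ twistedCentralizer Q v := by
  rw [mem_twistedCentralizer, involute_ι, mul_neg, ι_mul_ι_comm_of_isOrtho h]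

theorem involute_mem_adjoin_ι_image {S : Set M} {x : CliffordAlgebra Q}
    (hx : x ∈ Algebra.adjoin R (ι Q '' S)) : involute x ∈ Algebra.adjoin R (ι Q '' S) := by
  induction hx using Algebra.adjoin_induction with
  | mem x hx =>
    obtain ⟨m, hm, rfl⟩ := hx
    rw [involute_ι]
    exact neg_mem (Algebra.subset_adjoin ⟨m, hm, rfl⟩)
  | algebraMap r => rw [AlgHom.commutes]; exact Subalgebra.algebraMap_mem _ r
  | add x y _ _ hx hy => rw [map_add]; exact add_mem hx hy
  | mul x y _ _ hx hy => rw [map_mul]; exact mul_mem hx hy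

theorem exists_add_ι_mul_of_mem_adjoin_insert {A : Subalgebra R (CliffordAlgebra Q)} {u : M}
    (hinv : ∀ x ∈ A, involute x ∈ A) (hA : A ≤ twistedCentralizer Q u) {z : CliffordAlgebra Q}
    (hz : z ∈ Algebra.adjoin R (insert (ι Q u) (A : Set (CliffordAlgebra Q)))) :
    ∃ x ∈ A, ∃ y ∈ A, z = x + ι Q u * y := by
  induction hz using Algebra.adjoin_induction with
  | mem z hz =>
    rcases hz with rfl | hz
    · exact ⟨0, A.zero_mem, 1, A.one_mem, by rw [zero_add, mul_one]⟩
    · exact ⟨z, hz, 0, A.zero_mem, by rw [mul_zero, add_zero]⟩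
  | algebraMap r =>
    exact ⟨algebraMap R _ r, A.algebraMap_mem r, 0, A.zero_mem, by rw [mul_zero, add_zero]⟩
  | add z z' _ _ hz hz' =>
    obtain ⟨x, hx, y, hy, rfl⟩ := hz
    obtain ⟨x', hx', y', hy', rfl⟩ := hz'
    exact ⟨x + x', A.add_mem hx hx', y + y', A.add_mem hy hy', by noncomm_ring⟩
  | mul z z' _ _ hz hz' =>
    obtain ⟨x, hx, y, hy, rfl⟩ := hz
    obtain ⟨x', hx', y', hy', rfl⟩ := hz'
    refine ⟨x * x' + Q u • (involute y * y'), A.add_mem (A.mul_mem hx hx')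
        (A.smul_mem (A.mul_mem (hinv y hy) hy') _), involute x * y' + y * x',
        A.add_mem (A.mul_mem (hinv x hx) hy') (A.mul_mem hy hx'), ?_⟩
    have hxu : x * ι Q u = ι Q u * involute x := hA hx
    have hyu : y * ι Q u = ι Q u * involute y := hA hy
    calc (x + ι Q u * y) * (x' + ι Q u * y')
        = x * x' + x * ι Q u * y' + ι Q u * (y * x') + ι Q u * (y * ι Q u) * y' := by
          noncomm_ring
      _ = x * x' + Q u • (involute y * y') + ι Q u * (involute x * y' + y * x') := by
          rw [hxu, hyu, ← mul_assoc (ι Q u) (ι Q u), ι_sq_scalar, Algebra.smul_def]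
          noncomm_ring

theorem mem_of_mem_adjoin_insert_ι {A : Subalgebra R (CliffordAlgebra Q)} {u : M}
    (hu : IsUnit (QuadraticMap.polar Q u u)) (hinv : ∀ x ∈ A, involute x ∈ A)
    (hA : A ≤ twistedCentralizer Q u) {z : CliffordAlgebra Q}
    (hz : z ∈ Algebra.adjoin R (insert (ι Q u) (A : Set (CliffordAlgebra Q))))
    (hzu : z ∈ twistedCentralizer Q u) : z ∈ A := by
  obtain ⟨x, hx, y, hy, rfl⟩ := exists_add_ι_mul_of_mem_adjoin_insert hinv hA hz
  suffices y = 0 by rwa [this, mul_zero, add_zero]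
  have hxu : x * ι Q u = ι Q u * involute x := hA hx
  have hyu : y * ι Q u = ι Q u * involute y := hA hy
  have hpolar : QuadraticMap.polar Q u u • involute y = 0 := by
    rw [mem_twistedCentralizer] at hzu
    rw [Algebra.smul_def, ← ι_mul_ι_add_swap]
    calc (ι Q u * ι Q u + ι Q u * ι Q u) * involute y
        = (x * ι Q u + ι Q u * (y * ι Q u)) - ι Q u * (involute x - ι Q u * involute y) := by
          rw [hxu, hyu]; noncomm_ring
      _ = (x + ι Q u * y) * ι Q u - ι Q u * involute (x + ι Q u * y) := by
          rw [map_add, map_mul, involute_ι]; noncomm_ring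
      _ = 0 := sub_eq_zero.2 hzu
  simpa using congrArg involute (hu.smul_eq_zero.1 hpolar)

theorem star_mul_self_mem_twistedCentralizer {u : (CliffordAlgebra Q)ˣ}
    (hu : ∀ w, ∃ w', (u : CliffordAlgebra Q) * ι Q w * involute (↑u⁻¹ : CliffordAlgebra Q) =
      ι Q w') (v : M) :
    star (u : CliffordAlgebra Q) * (u : CliffordAlgebra Q) ∈ twistedCentralizer Q v := by
  obtain ⟨v', hv'⟩ := hu v
  have hleft : (u : CliffordAlgebra Q) * ι Q v = ι Q v' * involute (u : CliffordAlgebra Q) := by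
    rw [← hv', mul_assoc, ← map_mul, Units.inv_mul, map_one, mul_one]
  have hright : ι Q v * reverse (u : CliffordAlgebra Q) =
      star (u : CliffordAlgebra Q) * ι Q v' := by
    have h := congrArg reverse hv'
    rw [reverse.map_mul, reverse.map_mul, reverse_ι, reverse_ι, ← star_def] at h
    rw [← h, ← mul_assoc, ← mul_assoc, ← star_mul, Units.inv_mul, star_one, one_mul]
  calc star (u : CliffordAlgebra Q) * (u : CliffordAlgebra Q) * ι Q v
      = star (u : CliffordAlgebra Q) * ι Q v' * involute (u : CliffordAlgebra Q) := by
        rw [mul_assoc, hleft, mul_assoc]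
    _ = ι Q v * involute (star (u : CliffordAlgebra Q) * (u : CliffordAlgebra Q)) := by
        rw [← hright, map_mul, star_def', involute_involute, mul_assoc]

end TwistedCentralizer

variable {K V : Type*} [Field K] [AddCommGroup V] [Module K V] {Q : QuadraticForm K V}

theorem iInf_twistedCentralizer_eq_bot [FiniteDimensional K V] (h2 : (2 : K) ≠ 0)
    (hQ : Q.polarBilin.SeparatingLeft) :
    ⨅ v, twistedCentralizer Q v = ⊥ := by
  have : Invertible (2 : K) := invertibleOfNonzero h2
  obtain ⟨b, hb⟩ := LinearMap.BilinForm.exists_orthogonal_basis (B := Q.polarBilin)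
    (LinearMap.isSymm_def.2 fun x y => QuadraticMap.polar_comm Q x y)
  let gen (s : Finset (Fin (Module.finrank K V))) : Subalgebra K (CliffordAlgebra Q) :=
    Algebra.adjoin K (ι Q '' (b '' s))
  have hcomm (s) (j) (hj : j ∉ s) : gen s ≤ twistedCentralizer Q (b j) := by
    refine Algebra.adjoin_le ?_
    rintro _ ⟨_, ⟨i, hi, rfl⟩, rfl⟩
    exact ι_mem_twistedCentralizer
      (QuadraticMap.isOrtho_polarBilin.1 (hb (ne_of_mem_of_not_mem hi hj)))
  have htop : gen Finset.univ = ⊤ := by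
    refine eq_top_iff.2 (adjoin_range_ι (Q := Q) ▸ Algebra.adjoin_le ?_)
    rintro _ ⟨m, rfl⟩
    rw [← b.sum_repr m, map_sum]
    refine Subalgebra.sum_mem _ fun i _ => ?_
    rw [map_smul]
    exact Subalgebra.smul_mem _ (Algebra.subset_adjoin (Set.mem_image_of_mem _
      (Set.mem_image_of_mem _ (Finset.mem_coe.2 (Finset.mem_univ i))))) _
  refine eq_bot_iff.2 fun z hz => ?_
  rw [Algebra.mem_iInf] at hz
  suffices ∀ s, z ∈ gen s → z ∈ gen ∅ by
    simpa [gen] using this Finset.univ (htop ▸ Algebra.mem_top)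
  intro s
  induction s using Finset.induction_on with
  | empty => exact id
  | insert j s hj ih =>
    refine fun hzs => ih (mem_of_mem_adjoin_insert_ι ?_ (fun x => involute_mem_adjoin_ι_image)
      (hcomm s j hj) ?_ (hz (b j)))
    · exact (hb.not_isOrtho_basis_self_of_separatingLeft hQ j).isUnit
    · rwa [Algebra.adjoin_insert_adjoin, ← Set.image_insert_eq, ← Set.image_insert_eq,
        ← Finset.coe_insert]

theorem exists_unit_twistedConj_iff [Nontrivial (CliffordAlgebra Q)]
    (hQ : ⨅ v, twistedCentralizer Q v = ⊥) (x : CliffordAlgebra Q) :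
    (∃ u : (CliffordAlgebra Q)ˣ, (∀ w, ∃ w', (u : CliffordAlgebra Q) * ι Q w *
        involute (↑u⁻¹ : CliffordAlgebra Q) = ι Q w') ∧ (u : CliffordAlgebra Q) = x) ↔
      (∃ l : K, l ≠ 0 ∧ x * star x = algebraMap K _ l ∧ star x * x = algebraMap K _ l) ∧
        ∀ w, ∃ w', x * ι Q w * reverse x = ι Q w' := by
  constructor
  · rintro ⟨u, hu, rfl⟩
    obtain ⟨l, hl⟩ := Algebra.mem_bot.1 <|
      hQ ▸ Algebra.mem_iInf.2 (star_mul_self_mem_twistedCentralizer hu)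
    have hstar : star (u : CliffordAlgebra Q) = algebraMap K _ l * ↑u⁻¹ := by
      rw [hl, mul_assoc, Units.mul_inv, mul_one]
    have hmul_star :
        (u : CliffordAlgebra Q) * star (u : CliffordAlgebra Q) = algebraMap K _ l := by
      rw [hstar, ← mul_assoc, ← Algebra.commutes, mul_assoc, Units.mul_inv, mul_one]
    have hl0 : l ≠ 0 := by
      rintro rfl
      have := congrArg star (Units.mul_inv u)
      rw [star_mul, hstar, map_zero, zero_mul, mul_zero, star_one] at this
      exact zero_ne_one this
    refine ⟨⟨l, hl0, hmul_star, hl.symm⟩, fun w => ?_⟩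
    obtain ⟨w', hw'⟩ := hu w
    refine ⟨l • w', ?_⟩
    calc (u : CliffordAlgebra Q) * ι Q w * reverse (u : CliffordAlgebra Q)
        = (u * ι Q w * involute (↑u⁻¹ : CliffordAlgebra Q)) *
            involute ((u : CliffordAlgebra Q) * star (u : CliffordAlgebra Q)) := by
          rw [map_mul, star_def', involute_involute]
          simp only [mul_assoc]
          rw [← mul_assoc (involute _) (involute _), ← map_mul, Units.inv_mul, map_one, one_mul]
      _ = ι Q (l • w') := by
          rw [hw', hmul_star, AlgHom.commutes, ← Algebra.commutes, ← Algebra.smul_def, map_smul]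
  · rintro ⟨⟨l, hl, hx, hx'⟩, hW⟩
    have hinv : x * (l⁻¹ • star x) = 1 := by
      rw [mul_smul_comm, hx, Algebra.smul_def, ← map_mul, inv_mul_cancel₀ hl, map_one]
    have hinv' : (l⁻¹ • star x) * x = 1 := by
      rw [smul_mul_assoc, hx', Algebra.smul_def, ← map_mul, inv_mul_cancel₀ hl, map_one]
    refine ⟨⟨x, l⁻¹ • star x, hinv, hinv'⟩, fun w => ?_, rfl⟩
    obtain ⟨w', hw'⟩ := hW w
    refine ⟨l⁻¹ • w', ?_⟩
    change x * ι Q w * involute (l⁻¹ • star x) = _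
    rw [map_smul, star_def', involute_involute, mul_smul_comm, hw', map_smul]

end CliffordAlgebra

theorem Matrix.algebraMap_fin_two {R A : Type*} [CommRing R] [Semiring A] [Algebra R A] (r : R) :
    algebraMap R (Matrix (Fin 2) (Fin 2) A) r = !![algebraMap R A r, 0; 0, algebraMap R A r] := by
  rw [Matrix.algebraMap_eq_diagonal, Pi.algebraMap_def, Matrix.diagonal_fin_two]

namespace Vahlen

section CommRing

variable {R V : Type*} [CommRing R] [AddCommGroup V] [Module R V] {Q : QuadraticForm R V}

local notation "𝕄" => Matrix (Fin 2) (Fin 2) (CliffordAlgebra Q)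

def involuteMat (A : 𝕄) : 𝕄 :=
  !![involute (A 0 0), -involute (A 0 1); -involute (A 1 0), involute (A 1 1)]

def reverseMat (A : 𝕄) : 𝕄 :=
  !![star (A 1 1), star (A 0 1); star (A 1 0), star (A 0 0)]

def starMat (A : 𝕄) : 𝕄 :=
  !![reverse (A 1 1), -reverse (A 0 1); -reverse (A 1 0), reverse (A 0 0)]

variable (Q) in
/-- `ofVec Q (v, λ₁, λ₂) = φ (v + λ₁ f₁ + λ₂ f₂)`. -/
def ofVec : V × R × R →ₗ[R] 𝕄 where
  toFun w := !![ι Q w.1, algebraMap R _ w.2.1; algebraMap R _ w.2.2, -ι Q w.1]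
  map_add' w w' := by
    ext i j; fin_cases i <;> fin_cases j <;> simp [add_comm]
  map_smul' r w := by
    ext i j; fin_cases i <;> fin_cases j <;> simp [Algebra.smul_def]

theorem involuteMat_mul (A B : 𝕄) : involuteMat (A * B) = involuteMat A * involuteMat B := by
  ext i j; fin_cases i <;> fin_cases j <;> simp [involuteMat, Matrix.mul_apply] <;> abel

theorem involuteMat_add (A B : 𝕄) : involuteMat (A + B) = involuteMat A + involuteMat B := by
  ext i j; fin_cases i <;> fin_cases j <;> simp [involuteMat] <;> abel

theorem involuteMat_algebraMap (r : R) : involuteMat (algebraMap R 𝕄 r) = algebraMap R 𝕄 r := by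
  ext i j; fin_cases i <;> fin_cases j <;> simp [involuteMat, Matrix.algebraMap_eq_diagonal]

theorem reverseMat_mul (A B : 𝕄) : reverseMat (A * B) = reverseMat B * reverseMat A := by
  ext i j; fin_cases i <;> fin_cases j <;> simp [reverseMat, Matrix.mul_apply] <;> abel

theorem reverseMat_add (A B : 𝕄) : reverseMat (A + B) = reverseMat A + reverseMat B := by
  ext i j; fin_cases i <;> fin_cases j <;> simp [reverseMat]

theorem reverseMat_algebraMap (r : R) : reverseMat (algebraMap R 𝕄 r) = algebraMap R 𝕄 r := by
  ext i j; fin_cases i <;> fin_cases j <;> simp [reverseMat, Matrix.algebraMap_eq_diagonal]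

theorem reverseMat_reverseMat (A : 𝕄) : reverseMat (reverseMat A) = A := by
  ext i j; fin_cases i <;> fin_cases j <;> simp [reverseMat]

theorem involuteMat_reverseMat (A : 𝕄) : involuteMat (reverseMat A) = starMat A := by
  ext i j; fin_cases i <;> fin_cases j <;> simp [involuteMat, reverseMat, starMat, star_def']

theorem reverseMat_ofVec (w : V × R × R) : reverseMat (ofVec Q w) = ofVec Q w := by
  ext i j; fin_cases i <;> fin_cases j <;> simp [reverseMat, ofVec]

theorem involuteMat_eq_self_iff (A : 𝕄) :
    involuteMat A = A ↔ involute (A 0 0) = A 0 0 ∧ involute (A 1 1) = A 1 1 ∧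
      involute (A 0 1) = -A 0 1 ∧ involute (A 1 0) = -A 1 0 := by
  simp only [involuteMat, ← Matrix.ext_iff, Fin.forall_fin_two, Matrix.of_apply, Matrix.cons_val',
    Matrix.cons_val_zero, Matrix.cons_val_one, Matrix.empty_val', Matrix.cons_val_fin_one,
    neg_eq_iff_eq_neg]
  tauto

section Transfer

variable {QW : QuadraticForm R (V × R × R)}
  {g : CliffordAlgebra QW →ₐ[R] Matrix (Fin 2) (Fin 2) (CliffordAlgebra Q)}

theorem map_involute (hg : ∀ w, g (ι QW w) = ofVec Q w) (x : CliffordAlgebra QW) :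
    g (involute x) = involuteMat (g x) := by
  induction x using CliffordAlgebra.induction with
  | algebraMap r => rw [AlgHom.commutes, AlgHom.commutes, involuteMat_algebraMap]
  | ι w =>
    rw [involute_ι, map_neg, hg]
    ext i j; fin_cases i <;> fin_cases j <;> simp [involuteMat, ofVec]
  | mul x y hx hy => rw [map_mul, map_mul, map_mul, hx, hy, involuteMat_mul]
  | add x y hx hy => rw [map_add, map_add, map_add, hx, hy, involuteMat_add]

theorem map_reverse (hg : ∀ w, g (ι QW w) = ofVec Q w) (x : CliffordAlgebra QW) :
    g (reverse x) = reverseMat (g x) := by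
  induction x using CliffordAlgebra.induction with
  | algebraMap r => rw [reverse.commutes, AlgHom.commutes, reverseMat_algebraMap]
  | ι w => rw [reverse_ι, hg, reverseMat_ofVec]
  | mul x y hx hy => rw [reverse.map_mul, map_mul, map_mul, hx, hy, reverseMat_mul]
  | add x y hx hy => rw [map_add, map_add, map_add, hx, hy, reverseMat_add]

theorem map_star (hg : ∀ w, g (ι QW w) = ofVec Q w) (x : CliffordAlgebra QW) :
    g (star x) = starMat (g x) := by
  rw [star_def', map_involute hg, map_reverse hg, involuteMat_reverseMat]

end Transfer

theorem mul_starMat (A : 𝕄) :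
    A * starMat A =
      !![A 0 0 * reverse (A 1 1) - A 0 1 * reverse (A 1 0),
          A 0 1 * reverse (A 0 0) - A 0 0 * reverse (A 0 1);
        A 1 0 * reverse (A 1 1) - A 1 1 * reverse (A 1 0),
          A 1 1 * reverse (A 0 0) - A 1 0 * reverse (A 0 1)] := by
  ext i j; fin_cases i <;> fin_cases j <;> simp [starMat, Matrix.mul_apply] <;> abel

theorem starMat_mul (A : 𝕄) :
    starMat A * A =
      !![reverse (A 1 1) * A 0 0 - reverse (A 0 1) * A 1 0,
          reverse (A 1 1) * A 0 1 - reverse (A 0 1) * A 1 1;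
        reverse (A 0 0) * A 1 0 - reverse (A 1 0) * A 0 0,
          reverse (A 0 0) * A 1 1 - reverse (A 1 0) * A 0 1] := by
  ext i j; fin_cases i <;> fin_cases j <;> simp [starMat, Matrix.mul_apply] <;> abel

theorem mul_ofVec_mul_reverseMat (A : 𝕄) (v : V) :
    A * ofVec Q (v, 0, 0) * reverseMat A =
      !![A 0 0 * ι Q v * star (A 1 1) + A 0 1 * star (ι Q v) * star (A 1 0),
          A 0 0 * ι Q v * star (A 0 1) + A 0 1 * star (ι Q v) * star (A 0 0);
        A 1 0 * ι Q v * star (A 1 1) + A 1 1 * star (ι Q v) * star (A 1 0),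
          A 1 0 * ι Q v * star (A 0 1) + A 1 1 * star (ι Q v) * star (A 0 0)] := by
  ext i j; fin_cases i <;> fin_cases j <;> simp [ofVec, reverseMat, Matrix.mul_apply]

theorem mul_ofVec_f₁_mul_reverseMat (A : 𝕄) :
    A * ofVec Q (0, 1, 0) * reverseMat A =
      !![A 0 0 * star (A 1 0), A 0 0 * star (A 0 0);
        A 1 0 * star (A 1 0), A 1 0 * star (A 0 0)] := by
  ext i j; fin_cases i <;> fin_cases j <;> simp [ofVec, reverseMat, Matrix.mul_apply]

theorem mul_ofVec_f₂_mul_reverseMat (A : 𝕄) :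
    A * ofVec Q (0, 0, 1) * reverseMat A =
      !![A 0 1 * star (A 1 1), A 0 1 * star (A 0 1);
        A 1 1 * star (A 1 1), A 1 1 * star (A 0 1)] := by
  ext i j; fin_cases i <;> fin_cases j <;> simp [ofVec, reverseMat, Matrix.mul_apply]

theorem reverseMat_mul_ofVec_mul_reverseMat (A : 𝕄) (w : V × R × R) :
    reverseMat (A * ofVec Q w * reverseMat A) = A * ofVec Q w * reverseMat A := by
  rw [reverseMat_mul, reverseMat_mul, reverseMat_reverseMat, reverseMat_ofVec, mul_assoc]

theorem mem_range_ofVec_iff {X : 𝕄} (hX : reverseMat X = X) :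
    X ∈ LinearMap.range (ofVec Q) ↔
      (∃ v, X 0 0 = ι Q v) ∧ (∃ s, X 0 1 = algebraMap R _ s) ∧ (∃ s, X 1 0 = algebraMap R _ s) := by
  constructor
  · rintro ⟨⟨v, s, t⟩, rfl⟩
    exact ⟨⟨v, rfl⟩, ⟨s, rfl⟩, ⟨t, rfl⟩⟩
  · rintro ⟨⟨v, hv⟩, ⟨s, hs⟩, ⟨t, ht⟩⟩
    have h11 : X 1 1 = -ι Q v := by
      have h00 : star (X 1 1) = X 0 0 := congrFun (congrFun hX 0) 0
      rw [← star_ι, ← hv, ← h00, star_star]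
    refine ⟨(v, s, t), ?_⟩
    ext i j; fin_cases i <;> fin_cases j <;> simp [ofVec, hv, hs, ht, h11]

theorem forall_map_mem_submodule_iff {N : Type*} [AddCommGroup N] [Module R N]
    (f : V × R × R →ₗ[R] N) (P : Submodule R N) :
    (∀ w, f w ∈ P) ↔ (∀ v, f (v, 0, 0) ∈ P) ∧ f (0, 1, 0) ∈ P ∧ f (0, 0, 1) ∈ P := by
  refine ⟨fun h => ⟨fun v => h _, h _, h _⟩, ?_⟩
  rintro ⟨hv, h₁, h₂⟩ ⟨v, s, t⟩
  have hw : ((v, s, t) : V × R × R) = (v, 0, 0) + s • (0, 1, 0) + t • (0, 0, 1) := by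
    ext <;> simp
  rw [hw, map_add, map_add, map_smul, map_smul]
  exact P.add_mem (P.add_mem (hv v) (P.smul_mem s h₁)) (P.smul_mem t h₂)

end CommRing

section Field

variable {F V : Type*} [Field F] [AddCommGroup V] [Module F V] {Q : QuadraticForm F V}

local notation "𝕄" => Matrix (Fin 2) (Fin 2) (CliffordAlgebra Q)

theorem exists_mul_starMat_eq_algebraMap_iff (A : 𝕄) :
    (∃ l : F, l ≠ 0 ∧ A * starMat A = algebraMap F _ l ∧ starMat A * A = algebraMap F _ l) ↔
      (∃ l : F, l ≠ 0 ∧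
        A 0 0 * reverse (A 1 1) - A 0 1 * reverse (A 1 0) = algebraMap F (CliffordAlgebra Q) l ∧
        reverse (A 1 1) * A 0 0 - reverse (A 0 1) * A 1 0 = algebraMap F (CliffordAlgebra Q) l) ∧
      (A 0 1 * reverse (A 0 0) - A 0 0 * reverse (A 0 1) = 0 ∧
        A 1 0 * reverse (A 1 1) - A 1 1 * reverse (A 1 0) = 0) ∧
      (reverse (A 0 0) * A 1 0 - reverse (A 1 0) * A 0 0 = 0 ∧
        reverse (A 1 1) * A 0 1 - reverse (A 0 1) * A 1 1 = 0) := by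
  have hrev {x : CliffordAlgebra Q} {l : F} (h : x = algebraMap F _ l) :
      reverse x = algebraMap F _ l := by
    rw [h, reverse.commutes]
  simp only [mul_starMat, starMat_mul, Matrix.algebraMap_fin_two, EmbeddingLike.apply_eq_iff_eq,
    Matrix.vecCons_inj, and_true]
  constructor
  · rintro ⟨l, hl, ⟨⟨h₁, h₂⟩, h₂', -⟩, ⟨h₁', h₃'⟩, h₃, -⟩
    exact ⟨⟨l, hl, h₁, h₁'⟩, ⟨h₂, h₂'⟩, ⟨h₃, h₃'⟩⟩
  · rintro ⟨⟨l, hl, h₁, h₁'⟩, ⟨h₂, h₂'⟩, ⟨h₃, h₃'⟩⟩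
    refine ⟨l, hl, ⟨⟨h₁, h₂⟩, h₂', ?_⟩, ⟨h₁', h₃'⟩, h₃, ?_⟩
    · simpa only [map_sub, reverse.map_mul, reverse_reverse] using hrev h₁
    · simpa only [map_sub, reverse.map_mul, reverse_reverse] using hrev h₁'

theorem vahlenConds_iff (A : 𝕄) :
    VahlenConds Q A ↔
      (∃ l : F, l ≠ 0 ∧ A * starMat A = algebraMap F _ l ∧ starMat A * A = algebraMap F _ l) ∧
        ∀ w, A * ofVec Q w * reverseMat A ∈ LinearMap.range (ofVec Q) := by
  rw [exists_mul_starMat_eq_algebraMap_iff, show (∀ w, A * ofVec Q w * reverseMat A ∈ _) ↔ _ from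
    forall_map_mem_submodule_iff
      (LinearMap.mulRight F (reverseMat A) ∘ₗ LinearMap.mulLeft F A ∘ₗ ofVec Q) _]
  simp only [LinearMap.comp_apply, LinearMap.mulLeft_apply, LinearMap.mulRight_apply,
    mem_range_ofVec_iff (reverseMat_mul_ofVec_mul_reverseMat A _)]
  simp only [mul_ofVec_mul_reverseMat, mul_ofVec_f₁_mul_reverseMat, mul_ofVec_f₂_mul_reverseMat]
  simp only [VahlenConds, ← star_def', Matrix.of_apply, Matrix.cons_val', Matrix.cons_val_zero,
    Matrix.cons_val_one, Matrix.empty_val', Matrix.cons_val_fin_one, forall_and]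
  tauto

theorem separatingLeft_polarBilin_hyperbolic (h2 : (2 : F) ≠ 0) (S : LinearMap.BilinForm F V)
    (hS : ∀ x y, S x y = S y x) (hnd : ∀ x : V, (∀ y : V, S x y = 0) → x = 0)
    (QW : QuadraticForm F (V × F × F))
    (hQW : ∀ p : V × F × F, QW p = -(S p.1 p.1 - p.2.1 * p.2.2)) :
    QW.polarBilin.SeparatingLeft := by
  rintro ⟨v, a, b⟩ hp
  have hpolar (u : V) (c d : F) :
      QW.polarBilin (v, a, b) (u, c, d) = a * d + b * c - 2 * S v u := by
    simp only [QuadraticMap.polarBilin_apply_apply, QuadraticMap.polar, hQW, Prod.fst_add,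
      Prod.snd_add, map_add, LinearMap.add_apply, hS u v]
    ring
  have ha : a = 0 := by simpa [hpolar] using hp (0, 0, 1)
  have hb : b = 0 := by simpa [hpolar] using hp (0, 1, 0)
  have hv : v = 0 := hnd v fun u => by simpa [hpolar, h2] using hp (u, 0, 0)
  rw [ha, hb, hv, Prod.mk_zero_zero, Prod.mk_zero_zero]

theorem cliffordGroupConds_iff_map {QW : QuadraticForm F (V × F × F)}
    {g : CliffordAlgebra QW →ₐ[F] 𝕄} (hg : ∀ w, g (ι QW w) = ofVec Q w)
    (hinj : Function.Injective g) (x : CliffordAlgebra QW) :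
    ((∃ l : F, l ≠ 0 ∧ x * star x = algebraMap F _ l ∧ star x * x = algebraMap F _ l) ∧
        ∀ w, ∃ w', x * ι QW w * reverse x = ι QW w') ↔
      (∃ l : F, l ≠ 0 ∧ g x * starMat (g x) = algebraMap F _ l ∧
          starMat (g x) * g x = algebraMap F _ l) ∧
        ∀ w, g x * ofVec Q w * reverseMat (g x) ∈ LinearMap.range (ofVec Q) := by
  simp only [← hinj.eq_iff, map_mul, map_star hg, map_reverse hg, hg, AlgHom.commutes,
    LinearMap.mem_range, @eq_comm _ (ofVec Q _)]

end Field

end Vahlen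

open Vahlen in
theorem stmt_11 {F : Type*} [Field F] (hchar : (2 : F) ≠ 0)
    {V : Type*} [AddCommGroup V] [Module F V] [FiniteDimensional F V]
    (S : LinearMap.BilinForm F V) (hS : ∀ x y, S x y = S y x)
    (hnd : ∀ x : V, (∀ y : V, S x y = 0) → x = 0)
    (Q : QuadraticForm F V)
    (QW : QuadraticForm F (V × F × F))
    (hQW : ∀ p : V × F × F, QW p = -(S p.1 p.1 - p.2.1 * p.2.2))
    (g : CliffordAlgebra QW →ₐ[F] Matrix (Fin 2) (Fin 2) (CliffordAlgebra Q))
    (hg : ∀ (v : V) (l₁ l₂ : F),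
      g (ι QW (v, l₁, l₂)) = !![ι Q v, algebraMap F (CliffordAlgebra Q) l₁;
        algebraMap F (CliffordAlgebra Q) l₂, -(ι Q v)])
    (hbij : Function.Bijective g) :
    ∀ A : Matrix (Fin 2) (Fin 2) (CliffordAlgebra Q),
      ((∃ x : (CliffordAlgebra QW)ˣ,
          (∀ w : V × F × F, ∃ w' : V × F × F,
            (x : CliffordAlgebra QW) * ι QW w *
              involute (↑x⁻¹ : CliffordAlgebra QW) = ι QW w') ∧
          g ↑x = A) ↔ VahlenConds Q A) ∧
      ((∃ x : (CliffordAlgebra QW)ˣ,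
          (∀ w : V × F × F, ∃ w' : V × F × F,
            (x : CliffordAlgebra QW) * ι QW w *
              involute (↑x⁻¹ : CliffordAlgebra QW) = ι QW w') ∧
          involute (x : CliffordAlgebra QW) = (x : CliffordAlgebra QW) ∧
          g ↑x = A) ↔
        (VahlenConds Q A ∧
          involute (A 0 0) = A 0 0 ∧ involute (A 1 1) = A 1 1 ∧
          involute (A 0 1) = -(A 0 1) ∧ involute (A 1 0) = -(A 1 0))) := by
  intro A
  obtain ⟨x, rfl⟩ := hbij.2 A
  have hg' (w : V × F × F) : g (ι QW w) = ofVec Q w := hg w.1 w.2.1 w.2.2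
  -- makes `CliffordAlgebra QW` nontrivial
  have : Invertible (2 : F) := invertibleOfNonzero hchar
  have hΓ : (∃ u : (CliffordAlgebra QW)ˣ, (∀ w, ∃ w', (u : CliffordAlgebra QW) * ι QW w *
      involute (↑u⁻¹ : CliffordAlgebra QW) = ι QW w') ∧ (u : CliffordAlgebra QW) = x) ↔
      VahlenConds Q (g x) := by
    rw [CliffordAlgebra.exists_unit_twistedConj_iff (CliffordAlgebra.iInf_twistedCentralizer_eq_bot
      hchar (separatingLeft_polarBilin_hyperbolic hchar S hS hnd QW hQW)),
      cliffordGroupConds_iff_map hg' hbij.1, vahlenConds_iff]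
  have hpar : involute x = x ↔ involute (g x 0 0) = g x 0 0 ∧ involute (g x 1 1) = g x 1 1 ∧
      involute (g x 0 1) = -g x 0 1 ∧ involute (g x 1 0) = -g x 1 0 := by
    rw [← involuteMat_eq_self_iff, ← map_involute hg', hbij.1.eq_iff]
  simp only [hbij.1.eq_iff]
  refine ⟨hΓ, ?_⟩
  rw [← hΓ, ← hpar]
  constructor
  · rintro ⟨u, hu, hinv, rfl⟩
    exact ⟨⟨u, hu, rfl⟩, hinv⟩
  · rintro ⟨⟨u, hu, rfl⟩, hinv⟩
    exact ⟨u, hu, hinv, rfl⟩
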